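/- Let A and B be von Neumann algebras and Φ : A → B a unital order isomorphism (a linear bijection such that Φ and Φ⁻¹ are positive and Φ(1) = 1). Then Φ is a Jordan *-isomorphism: Φ(x*) = Φ(x)* and Φ(xy + yx) = Φ(x)Φ(y) + Φ(y)Φ(x) for all x, y ∈ A. -/
import Mathlib

set_option linter.unusedSectionVars false
set_option maxHeartbeats 1600000

section StarModuleDerivation

variable {A : Type*} [NormedRing A] [StarRing A] [CStarRing A]
  [NormedAlgebra ℂ A] [PartialOrder A] [StarOrderedRing A]

lemma aux_star_I_one : star (Complex.I • (1:A)) = -(Complex.I • (1:A)) := by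
  set z : A := Complex.I • (1:A) with hz
  have zmul : ∀ x : A, z * x = Complex.I • x := fun x => by rw [hz, smul_mul_assoc, one_mul]
  have mulz : ∀ x : A, x * z = Complex.I • x := fun x => by rw [hz, mul_smul_comm, mul_one]
  have zz : z * z = -1 := by
    rw [zmul, hz, smul_smul, Complex.I_mul_I, neg_smul, one_smul]
  have hjc : ∀ x : A, star z * x = x * star z := by
    intro x
    have h1 : star z * x = star (star x * z) := by rw [star_mul, star_star]
    have h2 : star x * z = z * star x := by rw [zmul, mulz]
    rw [h1, h2, star_mul, star_star]
  have jj : star z * star z = -1 := by rw [← star_mul, zz, star_neg, star_one]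
  set s : A := z * star z with hs
  have hss : star s = s := by rw [hs, star_mul, star_star]
  have ss1 : s * s = 1 := by
    have : s * s = z * (star z * z) * star z := by rw [hs]; noncomm_ring
    rw [this, hjc z, ← hs]
    have : z * (z * star z) * star z = (z * z) * (star z * star z) := by noncomm_ring
    rw [this, zz, jj]; noncomm_ring
  set q : A := 1 - s with hq
  have hqsa : star q = q := by rw [hq, star_sub, star_one, hss]
  have h2q : 0 ≤ q + q := by
    have h := star_mul_self_nonneg q
    have : star q * q = q + q := by
      rw [hqsa, hq]
      have : (1 - s) * (1 - s) = 1 - s - s + s * s := by noncomm_ring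
      rw [this, ss1]; abel
    rwa [this] at h
  have h2q' : 0 ≤ -(q + q) := by
    have h := star_mul_self_nonneg (z * q)
    have e : star (z * q) * (z * q) = -(q + q) := by
      rw [star_mul, hqsa]
      have e1 : q * star z * (z * q) = q * (star z * z) * q := by noncomm_ring
      have e2 : star z * z = s := by rw [hjc z, ← hs]
      rw [e1, e2]
      have e3 : q * s = -q := by
        rw [hq]
        have : (1 - s) * s = s - s * s := by noncomm_ring
        rw [this, ss1]; abel
      have e4 : q * s * q = -q * q := by rw [e3]
      rw [e4, hq]
      have : -(1 - s) * (1 - s) = -(1 - s - s + s * s) := by noncomm_ring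
      rw [this, ss1]; abel
    rwa [e] at h
  have hq0 : q = 0 := by
    have : q + q = 0 := le_antisymm (by simpa using neg_nonneg.mp h2q') h2q
    have h2 : (2:ℂ) • q = 0 := by rw [two_smul]; exact this
    simpa using (smul_eq_zero.mp h2).resolve_left (by norm_num)
  have hs1 : s = 1 := by have := hq0; rw [hq] at this; linear_combination (norm := abel) -this
  -- z * star z = 1  ⇒  star z = -z
  have : z * (z * star z) = z * 1 := by rw [← hs, hs1]
  have h3 : (z * z) * star z = z := by rw [← mul_assoc] at this; simpa using this
  rw [zz] at h3
  have : star z + z = 0 := by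
    have := h3
    linear_combination (norm := noncomm_ring) -this
  linear_combination (norm := abel) this

lemma aux_starModule : StarModule ℂ A := by
  have hreal : ∀ (r : ℝ) (x : A), star (r • x) = r • star x := by
    intro r x
    exact map_real_smul (starAddEquiv : A ≃+ A) continuous_star r x
  have hco : ∀ (r : ℝ) (x : A), (r : ℂ) • x = r • x := by
    intro r x
    rw [← smul_one_smul ℂ r x]
    norm_num
  have hI : ∀ x : A, star (Complex.I • x) = -(Complex.I • star x) := by
    intro x
    have h1 : Complex.I • x = (Complex.I • (1:A)) * x := by rw [smul_mul_assoc, one_mul]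
    rw [h1, star_mul, aux_star_I_one, mul_neg, mul_smul_comm, mul_one]
  constructor
  intro c x
  have hc : c = (c.re : ℂ) + (c.im : ℂ) * Complex.I := by simp [Complex.ext_iff]
  rw [hc, add_smul, star_add, mul_comm, mul_smul, hI, hco, hco, hreal, hreal,
    ← hco, ← hco]
  simp only [star_add, star_mul', Complex.star_def, Complex.conj_I, Complex.conj_ofReal]
  rw [add_smul, mul_smul]
  simp [smul_neg]

end StarModuleDerivation

noncomputable def tri (y : ℝ) : ℝ := max 0 (1 - |y|)

lemma tri_continuous : Continuous tri := by
  unfold tri; fun_prop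

lemma tri_nonneg (y : ℝ) : 0 ≤ tri y := le_max_left _ _

lemma tri_eq_zero {y : ℝ} (h : 1 ≤ |y|) : tri y = 0 := by
  unfold tri
  rw [max_eq_left]; linarith

lemma tri_eq {y : ℝ} (h : |y| ≤ 1) : tri y = 1 - |y| := by
  unfold tri
  rw [max_eq_right]; linarith

/-- Key partition lemma: for `u ∈ [0, n]`, the weighted sum of hat functions at integer
nodes equals the linear interpolation `f k * (1-s) + f (k+1) * s`. -/
lemma tri_sum_eq (n : ℕ) (hn : 1 ≤ n) (f : ℕ → ℝ) {u : ℝ} (hu0 : 0 ≤ u) (hun : u ≤ n) :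
    ∃ k s : _, (k + 1 ≤ n) ∧ 0 ≤ s ∧ s ≤ 1 ∧ u = k + s ∧
      (∑ i ∈ Finset.range (n+1), f i * tri (u - i)) = f k * (1 - s) + f (k+1) * s := by
  set k : ℕ := min (n-1) ⌊u⌋₊ with hk
  have hk1 : k + 1 ≤ n := by omega
  have hku : (k : ℝ) ≤ u := by
    rcases le_or_gt (⌊u⌋₊ : ℕ) (n-1) with h | h
    · have : k = ⌊u⌋₊ := by omega
      rw [this]; exact Nat.floor_le hu0
    · have hkn : k = n - 1 := by omega
      have : ((n:ℝ) - 1) ≤ u := by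
        have h2 : (n : ℝ) ≤ ⌊u⌋₊ := by exact_mod_cast by omega
        have := Nat.floor_le hu0
        linarith
      rw [hkn]
      push_cast [Nat.cast_sub hn]
      linarith
  have huk : u ≤ (k : ℝ) + 1 := by
    rcases le_or_gt (⌊u⌋₊ : ℕ) (n-1) with h | h
    · have : k = ⌊u⌋₊ := by omega
      rw [this]
      exact le_of_lt (Nat.lt_floor_add_one u)
    · have hkn : k = n - 1 := by omega
      rw [hkn]
      push_cast [Nat.cast_sub hn]
      linarith
  refine ⟨k, u - k, hk1, by linarith, by linarith, by ring, ?_⟩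
  have hsupp : ∀ i ∈ Finset.range (n+1), i ∉ ({k, k+1} : Finset ℕ) → f i * tri (u - i) = 0 := by
    intro i _ hi
    simp only [Finset.mem_insert, Finset.mem_singleton] at hi
    push_neg at hi
    have : (1:ℝ) ≤ |u - i| := by
      rcases lt_or_gt_of_ne hi.1 with h | h
      · rcases lt_or_gt_of_ne hi.2 with h2 | h2
        · -- i < k and i < k + 1 : i ≤ k - 1
          have : i + 1 ≤ k := by omega
          have : (i:ℝ) + 1 ≤ k := by exact_mod_cast this
          rw [abs_of_nonneg (by linarith)]
          linarith
        · -- i ≥ k + 2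
          have : (k:ℝ) + 2 ≤ i := by exact_mod_cast by omega
          rw [abs_of_nonpos (by linarith)]
          linarith
      · have : (k:ℝ) + 2 ≤ i := by exact_mod_cast by omega
        rw [abs_of_nonpos (by linarith)]
        linarith
    rw [tri_eq_zero this, mul_zero]
  have hsub : ({k, k+1} : Finset ℕ) ⊆ Finset.range (n+1) := by
    intro i hi
    simp only [Finset.mem_insert, Finset.mem_singleton] at hi
    rcases hi with h | h <;> simp [h] <;> omega
  rw [← Finset.sum_subset hsub hsupp, Finset.sum_pair (by omega : k ≠ k + 1)]
  have h1 : tri (u - k) = 1 - (u - k) := by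
    rw [tri_eq (by rw [abs_of_nonneg (by linarith)]; linarith), abs_of_nonneg (by linarith)]
  have h2 : tri (u - (k+1 : ℕ)) = u - k := by
    push_cast
    rw [tri_eq (by rw [abs_of_nonpos (by linarith)]; linarith), abs_of_nonpos (by linarith)]
    ring
  rw [h1, h2]

section KS

variable {A B : Type*} [CStarAlgebra A] [PartialOrder A] [StarOrderedRing A]
  [CStarAlgebra B] [PartialOrder B] [StarOrderedRing B]

lemma conj_sum_ineq (n : ℕ) (t : ℕ → ℝ) (b : ℕ → B) (hb : ∀ i, 0 ≤ b i)
    (h1 : ∑ i ∈ Finset.range (n+1), b i = 1) (v : B)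
    (hv : ∑ i ∈ Finset.range (n+1), t i • b i = v) :
    v * v ≤ ∑ i ∈ Finset.range (n+1), (t i)^2 • b i := by
  have hbsa : ∀ i, star (b i) = b i := fun i => (IsSelfAdjoint.of_nonneg (hb i))
  have hvsa : star v = v := by
    rw [← hv, star_sum]
    exact Finset.sum_congr rfl fun i _ => by rw [star_smul, star_trivial, hbsa]
  have key : (0:B) ≤ ∑ i ∈ Finset.range (n+1), star (t i • 1 - v) * (b i * (t i • 1 - v)) :=
    Finset.sum_nonneg fun i _ => by
      have := star_left_conjugate_nonneg (hb i) (t i • 1 - v)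
      rwa [mul_assoc] at this
  have hterm : ∀ i, star (t i • (1:B) - v) * (b i * (t i • 1 - v)) =
      (t i)^2 • b i - ((t i • b i) * v + v * (t i • b i) - v * b i * v) := by
    intro i
    have hstar : star (t i • (1:B) - v) = t i • 1 - v := by
      rw [star_sub, hvsa, star_smul, star_trivial, star_one]
    rw [hstar]
    simp only [sub_mul, mul_sub, smul_mul_assoc, mul_smul_comm, one_mul, mul_one,
      smul_smul, sq, mul_assoc, smul_add, smul_sub]
    module
  rw [Finset.sum_congr rfl fun i _ => hterm i, Finset.sum_sub_distrib] at key
  have e1 : ∑ i ∈ Finset.range (n+1), ((t i • b i) * v + v * (t i • b i) - v * b i * v)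
      = v * v := by
    rw [Finset.sum_sub_distrib, Finset.sum_add_distrib, ← Finset.sum_mul, ← Finset.mul_sum,
      ← Finset.sum_mul, ← Finset.mul_sum, hv, h1, mul_one]
    abel
  rw [e1] at key
  exact sub_nonneg.mp key

lemma kadison_schwarz (Φ : A →ₗ[ℂ] B) (hΦ1 : Φ 1 = 1)
    (hpos : ∀ x : A, 0 ≤ x → 0 ≤ Φ x) (a : A) (ha : IsSelfAdjoint a) :
    Φ a * Φ a ≤ Φ (a * a) := by
  rcases subsingleton_or_nontrivial A with hA | hA
  · have : a = 0 := Subsingleton.elim _ _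
    simp [this]
  have mono : ∀ x y : A, x ≤ y → Φ x ≤ Φ y := by
    intro x y hxy
    have := hpos _ (sub_nonneg.mpr hxy)
    rw [map_sub] at this
    exact sub_nonneg.mp this
  -- reduce to: for every δ > 0, Φ a * Φ a ≤ Φ (a * a) + δ • 1
  have key : ∀ δ : ℝ, 0 < δ → Φ a * Φ a ≤ Φ (a * a) + δ • 1 := by
    intro δ hδ
    set M : ℝ := ‖a‖ with hM
    set h : ℝ := Real.sqrt δ with hh
    have hh0 : 0 < h := Real.sqrt_pos.mpr hδ
    have hh2 : h ^ 2 = δ := Real.sq_sqrt hδ.le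
    set n : ℕ := ⌈2 * M / h⌉₊ + 1 with hn
    have hn1 : 1 ≤ n := by omega
    set c : ℝ := -M with hc
    set t : ℕ → ℝ := fun i => c + i * h with ht
    set φ : ℕ → ℝ → ℝ := fun i x => tri ((x - c) / h - i) with hφ
    have hφcont : ∀ i, Continuous (φ i) := by
      intro i
      exact tri_continuous.comp (by fun_prop)
    -- spectrum facts
    have hspec : ∀ x ∈ spectrum ℝ a, 0 ≤ (x - c) / h ∧ (x - c) / h ≤ n := by
      intro x hx
      have hxM : |x| ≤ M := by
        simpa using spectrum.norm_le_norm_of_mem hx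
      rw [abs_le] at hxM
      constructor
      · apply div_nonneg _ hh0.le
        rw [hc]; linarith
      · rw [div_le_iff₀ hh0]
        have h2M : 2 * M / h ≤ (⌈2 * M / h⌉₊ : ℝ) := Nat.le_ceil _
        have : 2 * M ≤ (⌈2 * M / h⌉₊ : ℝ) * h := by
          rw [← div_le_iff₀ hh0] at *
          exact h2M
        have hnh : (n : ℝ) * h = (⌈2 * M / h⌉₊ : ℝ) * h + h := by
          rw [hn]; push_cast; ring
        rw [hnh, hc]
        linarith
    -- the three pointwise sum facts on the spectrum
    have hsum : ∀ (f : ℝ → ℝ), ∀ x ∈ spectrum ℝ a,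
        ∃ k s : _, (k + 1 ≤ n) ∧ 0 ≤ s ∧ s ≤ 1 ∧ x = t k + s * h ∧
          (∑ i ∈ Finset.range (n+1), f (t i) * φ i x) = f (t k) * (1 - s) + f (t (k+1)) * s := by
      intro f x hx
      obtain ⟨hu0, hun⟩ := hspec x hx
      obtain ⟨k, s, hk1, hs0, hs1, hus, hsum⟩ := tri_sum_eq n hn1 (fun i => f (t i)) hu0 hun
      refine ⟨k, s, hk1, hs0, hs1, ?_, hsum⟩
      field_simp at hus
      rw [ht]
      simp only []
      linarith [hus]
    have P1 : ∀ x ∈ spectrum ℝ a, (∑ i ∈ Finset.range (n+1), φ i x) = 1 := by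
      intro x hx
      obtain ⟨k, s, hk1, hs0, hs1, hxs, hs⟩ := hsum (fun _ => 1) x hx
      simpa using hs
    have P2 : ∀ x ∈ spectrum ℝ a, (∑ i ∈ Finset.range (n+1), t i * φ i x) = x := by
      intro x hx
      obtain ⟨k, s, hk1, hs0, hs1, hxs, hs⟩ := hsum (fun y => y) x hx
      rw [hs, hxs]
      have : t (k+1) = t k + h := by rw [ht]; push_cast; ring
      rw [this]; ring
    have P3 : ∀ x ∈ spectrum ℝ a, (∑ i ∈ Finset.range (n+1), (t i)^2 * φ i x) ≤ x^2 + δ := by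
      intro x hx
      obtain ⟨k, s, hk1, hs0, hs1, hxs, hs⟩ := hsum (fun y => y^2) x hx
      rw [hs, hxs]
      have htk : t (k+1) = t k + h := by rw [ht]; push_cast; ring
      rw [htk, ← hh2]
      have hs2 : s * (1 - s) * h^2 ≤ 1 * h^2 := by
        apply mul_le_mul_of_nonneg_right _ (sq_nonneg h)
        nlinarith
      nlinarith [hs2]
    -- cfc level
    set e : ℕ → A := fun i => cfc (φ i) a with he
    have hcont' : ∀ i ∈ Finset.range (n+1), ContinuousOn (φ i) (spectrum ℝ a) :=
      fun i _ => (hφcont i).continuousOn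
    have he0 : ∀ i, 0 ≤ e i := fun i => cfc_nonneg (fun x _ => tri_nonneg _)
    have hesum : ∑ i ∈ Finset.range (n+1), e i = 1 := by
      rw [he, ← cfc_sum φ a _ hcont']
      rw [show ((∑ i ∈ Finset.range (n+1), φ i)) = (fun x => ∑ i ∈ Finset.range (n+1), φ i x)
        from by ext x; simp]
      rw [cfc_congr P1, cfc_const_one ℝ a]
    have hea : ∑ i ∈ Finset.range (n+1), t i • e i = a := by
      have : ∀ i, t i • e i = cfc (fun x => t i * φ i x) a := by
        intro i
        rw [he, cfc_const_mul (t i) (φ i) a (hφcont i).continuousOn]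
      rw [Finset.sum_congr rfl fun i _ => this i, ← cfc_sum _ a _ (fun i _ => by fun_prop)]
      rw [show ((∑ i ∈ Finset.range (n+1), fun x => t i * φ i x))
          = (fun x => ∑ i ∈ Finset.range (n+1), t i * φ i x) from by ext x; simp]
      rw [cfc_congr P2, cfc_id' ℝ a]
    have heq : ∑ i ∈ Finset.range (n+1), (t i)^2 • e i ≤ a * a + δ • 1 := by
      have : ∀ i, (t i)^2 • e i = cfc (fun x => (t i)^2 * φ i x) a := by
        intro i
        rw [he, cfc_const_mul ((t i)^2) (φ i) a (hφcont i).continuousOn]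
      rw [Finset.sum_congr rfl fun i _ => this i, ← cfc_sum _ a _ (fun i _ => by fun_prop)]
      rw [show ((∑ i ∈ Finset.range (n+1), fun x => (t i)^2 * φ i x))
          = (fun x => ∑ i ∈ Finset.range (n+1), (t i)^2 * φ i x) from by ext x; simp]
      calc cfc (fun x => ∑ i ∈ Finset.range (n+1), (t i)^2 * φ i x) a
          ≤ cfc (fun x : ℝ => x^2 + δ) a := by
            apply cfc_mono P3 (by fun_prop) (by fun_prop)
        _ = a * a + δ • 1 := by
            rw [cfc_add a _ _ (by fun_prop) (by fun_prop)]
            rw [show (fun x : ℝ => x^2) = (· ^ 2) from rfl, cfc_pow_id a 2, cfc_const δ a]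
            rw [sq, Algebra.algebraMap_eq_smul_one]
    -- B level
    set b : ℕ → B := fun i => Φ (e i) with hbdef
    have hb0 : ∀ i, 0 ≤ b i := fun i => hpos _ (he0 i)
    have hbsum : ∑ i ∈ Finset.range (n+1), b i = 1 := by
      rw [hbdef, ← map_sum, hesum, hΦ1]
    have hbv : ∑ i ∈ Finset.range (n+1), t i • b i = Φ a := by
      rw [hbdef]
      simp only [← LinearMap.map_smul_of_tower]
      rw [← map_sum, hea]
    have main : Φ a * Φ a ≤ ∑ i ∈ Finset.range (n+1), (t i)^2 • b i :=
      conj_sum_ineq n t b hb0 hbsum (Φ a) hbv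
    calc Φ a * Φ a ≤ ∑ i ∈ Finset.range (n+1), (t i)^2 • b i := main
      _ = Φ (∑ i ∈ Finset.range (n+1), (t i)^2 • e i) := by
          rw [hbdef, map_sum]
          exact Finset.sum_congr rfl fun i _ => (LinearMap.map_smul_of_tower Φ _ _).symm
      _ ≤ Φ (a * a + δ • 1) := mono _ _ heq
      _ = Φ (a * a) + δ • 1 := by
          rw [map_add, LinearMap.map_smul_of_tower, hΦ1]
  -- limit argument
  have htend : Filter.Tendsto (fun δ : ℝ => Φ (a * a) + δ • (1:B)) (nhdsWithin 0 (Set.Ioi 0))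
      (nhds (Φ (a * a))) := by
    have hcont : Continuous (fun δ : ℝ => Φ (a * a) + δ • (1:B)) := by fun_prop
    have := hcont.tendsto 0
    simp only [zero_smul, add_zero] at this
    exact this.mono_left nhdsWithin_le_nhds
  refine ge_of_tendsto htend ?_
  filter_upwards [self_mem_nhdsWithin] with δ hδ
  exact key δ hδ

end KS

lemma jordan_expand {B : Type*} [Ring B] [Module ℂ B]
    [SMulCommClass ℂ B B] [IsScalarTower ℂ B B] (p1 q1 p2 q2 : B) :
    (p1 + Complex.I • q1) * (p2 + Complex.I • q2)
      + (p2 + Complex.I • q2) * (p1 + Complex.I • q1)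
    = ((p1*p2 + p2*p1) - (q1*q2 + q2*q1))
      + Complex.I • ((p1*q2 + q2*p1) + (q1*p2 + p2*q1)) := by
  simp only [mul_add, add_mul, smul_mul_assoc, mul_smul_comm, smul_smul, smul_add, smul_sub,
    Complex.I_mul_I, neg_smul, one_smul]
  abel

/-- Kadison's theorem: a unital linear order isomorphism between von Neumann algebras
(modelled as unital C*-algebras with their canonical order) is a Jordan
*-isomorphism: it preserves adjoints and the Jordan product. -/
theorem unital_order_isomorphism_is_jordan_star_isomorphism
    {A B : Type*}
    [NormedRing A] [StarRing A] [CStarRing A] [CompleteSpace A] [NormedAlgebra ℂ A]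
    [PartialOrder A] [StarOrderedRing A]
    [NormedRing B] [StarRing B] [CStarRing B] [CompleteSpace B] [NormedAlgebra ℂ B]
    [PartialOrder B] [StarOrderedRing B]
    (Φ : A →ₗ[ℂ] B) (hbij : Function.Bijective Φ) (hΦ1 : Φ 1 = 1)
    (hpos : ∀ x : A, 0 ≤ x → 0 ≤ Φ x)
    (hinv : ∀ x : A, 0 ≤ Φ x → 0 ≤ x) :
    (∀ x : A, Φ (star x) = star (Φ x)) ∧
    (∀ x y : A, Φ (x * y + y * x) = Φ x * Φ y + Φ y * Φ x) := by
  haveI hsmA : StarModule ℂ A := aux_starModule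
  haveI hsmB : StarModule ℂ B := aux_starModule
  letI : CStarAlgebra A :=
    { ‹NormedRing A›, ‹StarRing A›, ‹CStarRing A›, ‹NormedAlgebra ℂ A›, hsmA,
      ‹CompleteSpace A› with }
  letI : CStarAlgebra B :=
    { ‹NormedRing B›, ‹StarRing B›, ‹CStarRing B›, ‹NormedAlgebra ℂ B›, hsmB,
      ‹CompleteSpace B› with }
  set e : A ≃ₗ[ℂ] B := LinearEquiv.ofBijective Φ hbij with he
  set Ψ : B →ₗ[ℂ] A := (e.symm : B →ₗ[ℂ] A) with hΨ
  have hΦΨ : ∀ y, Φ (Ψ y) = y := fun y => e.apply_symm_apply y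
  have hΨΦ : ∀ x, Ψ (Φ x) = x := fun x => e.symm_apply_apply x
  have hΨ1 : Ψ 1 = 1 := by have := hΨΦ 1; rwa [hΦ1] at this
  have hΨpos : ∀ y : B, 0 ≤ y → 0 ≤ Ψ y := fun y hy => hinv _ (by rwa [hΦΨ])
  -- Φ preserves selfadjointness
  have hsa : ∀ a : A, IsSelfAdjoint a → IsSelfAdjoint (Φ a) := by
    intro a ha
    have hle := ha.neg_algebraMap_norm_le_self
    rw [Algebra.algebraMap_eq_smul_one] at hle
    have hp : (0:A) ≤ ‖a‖ • 1 + a := by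
      have := sub_nonneg.mpr hle
      rwa [sub_neg_eq_add, add_comm] at this
    have h1 : IsSelfAdjoint (Φ (‖a‖ • 1 + a)) := IsSelfAdjoint.of_nonneg (hpos _ hp)
    have h2 : Φ (‖a‖ • (1:A) + a) = ‖a‖ • (1:B) + Φ a := by
      rw [map_add, LinearMap.map_smul_of_tower, hΦ1]
    rw [h2] at h1
    have h3 : IsSelfAdjoint (‖a‖ • (1:B)) :=
      IsSelfAdjoint.smul (star_trivial _) (IsSelfAdjoint.one B)
    simpa using h1.sub h3
  -- Φ preserves squares of selfadjoint elements
  have hsq : ∀ a : A, IsSelfAdjoint a → Φ (a * a) = Φ a * Φ a := by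
    intro a ha
    refine le_antisymm ?_ (kadison_schwarz Φ hΦ1 hpos a ha)
    have h2 := kadison_schwarz Ψ hΨ1 hΨpos (Φ a) (hsa a ha)
    rw [hΨΦ] at h2
    have h3 := hpos _ (sub_nonneg.mpr h2)
    rw [map_sub, hΦΨ] at h3
    exact sub_nonneg.mp h3
  -- Jordan property on selfadjoint elements
  have hjsa : ∀ a b : A, IsSelfAdjoint a → IsSelfAdjoint b →
      Φ (a*b + b*a) = Φ a * Φ b + Φ b * Φ a := by
    intro a b ha hb
    have expand : (a+b)*(a+b) = a*a + (a*b + b*a) + b*b := by noncomm_ring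
    have expand2 : (Φ a + Φ b)*(Φ a + Φ b)
        = Φ a * Φ a + (Φ a * Φ b + Φ b * Φ a) + Φ b * Φ b := by noncomm_ring
    have l1 : Φ ((a+b)*(a+b)) = Φ a * Φ a + Φ (a*b+b*a) + Φ b * Φ b := by
      rw [expand, map_add, map_add, hsq a ha, hsq b hb]
    have l2 : Φ ((a+b)*(a+b)) = Φ a * Φ a + (Φ a * Φ b + Φ b * Φ a) + Φ b * Φ b := by
      rw [hsq (a+b) (ha.add hb), map_add, expand2]
    have l3 := l1.symm.trans l2
    exact add_right_cancel (add_left_cancel (by rwa [add_assoc, add_assoc] at l3 :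
      Φ a * Φ a + (Φ (a*b+b*a) + Φ b * Φ b) = Φ a * Φ a + ((Φ a * Φ b + Φ b * Φ a) + Φ b * Φ b)))
  -- selfadjoint decomposition
  have decomp : ∀ x : A, ∃ p k : A, IsSelfAdjoint p ∧ IsSelfAdjoint k ∧
      x = p + Complex.I • k := by
    intro x
    refine ⟨(2⁻¹:ℂ) • (x + star x), (-(2⁻¹) * Complex.I : ℂ) • (x - star x), ?_, ?_, ?_⟩
    · rw [IsSelfAdjoint, star_smul, star_add, star_star]
      have h1 : star ((2:ℂ)⁻¹) = (2:ℂ)⁻¹ := by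
        simp [Complex.star_def]
      rw [h1, add_comm]
    · rw [IsSelfAdjoint, star_smul, star_sub, star_star]
      have h1 : star ((-(2⁻¹) * Complex.I : ℂ)) = (2⁻¹ * Complex.I : ℂ) := by
        simp [Complex.star_def]
      rw [h1]
      module
    · rw [smul_smul]
      have h2 : Complex.I * (-(2⁻¹) * Complex.I) = (2⁻¹ : ℂ) := by
        have h3 : Complex.I * Complex.I = -1 := Complex.I_mul_I
        ring_nf
        rw [Complex.I_sq]
        ring
      rw [h2]
      module
  -- star preservation
  have hstar : ∀ x : A, Φ (star x) = star (Φ x) := by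
    intro x
    obtain ⟨p, k, hp, hk, rfl⟩ := decomp x
    have h1 : star (p + Complex.I • k) = p + (-Complex.I) • k := by
      rw [star_add, star_smul, hp.star_eq, hk.star_eq, Complex.star_def, Complex.conj_I]
    have h2 : star (Φ (p + Complex.I • k)) = Φ p + (-Complex.I) • Φ k := by
      rw [map_add, map_smul, star_add, star_smul, (hsa p hp).star_eq, (hsa k hk).star_eq,
        Complex.star_def, Complex.conj_I]
    rw [h1, h2, map_add, map_smul]
  refine ⟨hstar, ?_⟩
  -- general Jordan property
  intro x y
  obtain ⟨p1, k1, hp1, hk1, rfl⟩ := decomp x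
  obtain ⟨p2, k2, hp2, hk2, rfl⟩ := decomp y
  have hJ := jordan_expand p1 k1 p2 k2
  have hJ' := jordan_expand (Φ p1) (Φ k1) (Φ p2) (Φ k2)
  rw [hJ]
  rw [show Φ (p1 + Complex.I • k1) = Φ p1 + Complex.I • Φ k1 by rw [map_add, map_smul]]
  rw [show Φ (p2 + Complex.I • k2) = Φ p2 + Complex.I • Φ k2 by rw [map_add, map_smul]]
  rw [hJ']
  rw [map_add, map_sub, map_smul, hjsa p1 p2 hp1 hp2, hjsa k1 k2 hk1 hk2, map_add,
    hjsa p1 k2 hp1 hk2, hjsa k1 p2 hk1 hp2]
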